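/- Let c : ℤ×ℤ → ℂ be a system of Fourier coefficients for φ : ℍ × ℂ → ℂ, let t ≥ 1 and b ≥ 1 be integers, and fix integers n_b and k with 0 ≤ n_b ≤ b−1. Then for every τ in the upper half-plane, (1/b) · ∑_{j=0}^{b−1} exp(2πi·t·n_b²·τ/b²) · φ(τ, (n_b·τ + j)/b) · exp(−2πi·k·j/b) = ∑_{(n,l) ∈ ℤ×ℤ, l ≡ k (mod b)} c(n, l) · exp(2πi·(n + n_b·l/b + t·n_b²/b²)·τ), where the family on the right-hand side is summable. -/

import Mathlib

/-!
Substitute the Fourier expansion of `φ` at `z = (n_b τ + j)/b` into each of the `b` terms of the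
average. After absorbing the factor `exp(2πi t n_b² τ / b²)`, the `(n,l)`-th coefficient becomes
the target term times the twist `exp(2πi (l - k) j / b)`, and averaging the twist over `j` is the
orthogonality of `b`-th roots of unity: it gives `1` if `b ∣ l - k` and `0` otherwise.
-/

open Complex Finset

/-- `c` is a system of Fourier coefficients for `φ`: for every `τ` in the upper
half-plane and every `z`, the family `(n,l) ↦ c(n,l)·exp(2πi(nτ+lz))` is summable
with sum `φ(τ,z)`. -/
def IsFourierCoeffs (φ : ℂ → ℂ → ℂ) (c : ℤ → ℤ → ℂ) : Prop :=
  ∀ τ z : ℂ, 0 < τ.im →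
    HasSum (fun p : ℤ × ℤ =>
      c p.1 p.2 * Complex.exp (2 * Real.pi * Complex.I * (p.1 * τ + p.2 * z))) (φ τ z)

theorem IsPrimitiveRoot.sum_range_zpow_pow_eq_ite {K : Type*} [Field K] {ζ : K} {b : ℕ}
    (hζ : IsPrimitiveRoot ζ b) (m : ℤ) :
    ∑ j ∈ range b, (ζ ^ m) ^ j = if (b : ℤ) ∣ m then (b : K) else 0 := by
  split_ifs with hdvd
  · simp [(hζ.zpow_eq_one_iff_dvd m).2 hdvd]
  · have hne : ζ ^ m ≠ 1 := mt (hζ.zpow_eq_one_iff_dvd m).1 hdvd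
    have hpow : (ζ ^ m) ^ b = 1 := by
      rw [← zpow_natCast, ← zpow_mul, mul_comm, zpow_mul, zpow_natCast, hζ.pow_eq_one, one_zpow]
    rw [geom_sum_eq hne, hpow, sub_self, zero_div]

theorem sum_range_exp_two_pi_I_mul_div_eq_ite {b : ℕ} (hb : b ≠ 0) (m : ℤ) :
    ∑ j ∈ range b, exp (2 * Real.pi * I * m * j / b) = if (b : ℤ) ∣ m then (b : ℂ) else 0 := by
  rw [← (isPrimitiveRoot_exp b hb).sum_range_zpow_pow_eq_ite m]
  refine sum_congr rfl fun j _ => ?_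
  rw [← exp_int_mul, ← exp_nat_mul]
  ring_nf

theorem exp_mul_fourier_term_mul_exp (t nb k n l : ℤ) {b : ℕ} (hb : b ≠ 0) (a τ : ℂ) (j : ℕ) :
    exp (2 * Real.pi * I * t * nb ^ 2 * τ / (b : ℂ) ^ 2) *
        (a * exp (2 * Real.pi * I * (n * τ + l * ((nb * τ + j) / b)))) *
        exp (-(2 * Real.pi * I * k * j) / b) =
      a * exp (2 * Real.pi * I * ((n : ℂ) + nb * l / b + t * nb ^ 2 / (b : ℂ) ^ 2) * τ) *
        exp (2 * Real.pi * I * (l - k : ℤ) * j / b) := by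
  rw [mul_left_comm, mul_assoc a, mul_assoc a, ← exp_add, ← exp_add, ← exp_add]
  congr 2
  have hbC : (b : ℂ) ≠ 0 := Nat.cast_ne_zero.2 hb
  push_cast
  field_simp
  ring

theorem generating_function_identity_general (t : ℤ) (b : ℕ) (hb : 1 ≤ b)
    (φ : ℂ → ℂ → ℂ) (c : ℤ → ℤ → ℂ) (hc : IsFourierCoeffs φ c)
    (nb k : ℤ) :
    ∀ τ : ℂ, 0 < τ.im →
      HasSum (fun p : {q : ℤ × ℤ // (b : ℤ) ∣ q.2 - k} =>
          c p.1.1 p.1.2 *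
            Complex.exp (2 * Real.pi * Complex.I *
              ((p.1.1 : ℂ) + nb * p.1.2 / b + t * nb ^ 2 / (b : ℂ) ^ 2) * τ))
        ((1 / (b : ℂ)) * ∑ j ∈ Finset.range b,
          Complex.exp (2 * Real.pi * Complex.I * t * nb ^ 2 * τ / (b : ℂ) ^ 2) *
            φ τ ((nb * τ + j) / b) *
            Complex.exp (-(2 * Real.pi * Complex.I * k * j) / b)) := by
  intro τ hτ
  have hb0 : b ≠ 0 := by omega
  have hsum := (hasSum_sum (s := range b) fun (j : ℕ) _ =>
    ((hc τ ((nb * τ + j) / b) hτ).mul_left (exp (2 * Real.pi * I * t * nb ^ 2 * τ / (b : ℂ) ^ 2))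
      ).mul_right (exp (-(2 * Real.pi * I * k * j) / b))).mul_left (1 / (b : ℂ))
  refine (hasSum_subtype_iff_indicator (s := {q : ℤ × ℤ | (b : ℤ) ∣ q.2 - k})
    (f := fun p : ℤ × ℤ =>
      c p.1 p.2 * exp (2 * Real.pi * I * ((p.1 : ℂ) + nb * p.2 / b + t * nb ^ 2 / (b : ℂ) ^ 2) * τ))
    ).2 (hsum.congr_fun fun p => ?_)
  simp only [exp_mul_fourier_term_mul_exp t nb k _ _ hb0, ← mul_sum,
    sum_range_exp_two_pi_I_mul_div_eq_ite hb0]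
  simp only [Set.indicator_apply, Set.mem_ofPred_eq]
  split_ifs
  · field_simp
  · ring

/-- Generating-function identity: the averaged sum of specializations
`(1/b)·∑_{j=0}^{b−1} exp(2πi·t·n_b²·τ/b²)·φ(τ, (n_b τ + j)/b)·exp(−2πi·k·j/b)`
equals the (summable) sum over pairs `(n,l)` with `l ≡ k (mod b)` of
`c(n,l)·exp(2πi(n + n_b l/b + t n_b²/b²)τ)`. -/
theorem generating_function_identity (t : ℤ) (ht : 1 ≤ t) (b : ℕ) (hb : 1 ≤ b)
    (φ : ℂ → ℂ → ℂ) (c : ℤ → ℤ → ℂ) (hc : IsFourierCoeffs φ c)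
    (nb k : ℤ) (hnb : 0 ≤ nb ∧ nb ≤ (b : ℤ) - 1) :
    ∀ τ : ℂ, 0 < τ.im →
      HasSum (fun p : {q : ℤ × ℤ // (b : ℤ) ∣ q.2 - k} =>
          c p.1.1 p.1.2 *
            Complex.exp (2 * Real.pi * Complex.I *
              ((p.1.1 : ℂ) + nb * p.1.2 / b + t * nb ^ 2 / (b : ℂ) ^ 2) * τ))
        ((1 / (b : ℂ)) * ∑ j ∈ Finset.range b,
          Complex.exp (2 * Real.pi * Complex.I * t * nb ^ 2 * τ / (b : ℂ) ^ 2) *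
            φ τ ((nb * τ + j) / b) *
            Complex.exp (-(2 * Real.pi * Complex.I * k * j) / b)) :=
  generating_function_identity_general t b hb φ c hc nb k
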